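/- Let b be a nontrivial planar loop in PL_0(V) with 2-dimensional span U, and let x ∈ PL_0(V) be such that the conjugate x · b · x^{-1} is again a planar loop. Then x lies in PL_0(U), i.e., every letter of its minimal representative belongs to U. -/

import Mathlib

/-!
STATEMENT 5: If `b` is a nontrivial planar loop in `PL₀(V)` with 2-dimensional span
`U`, and `x ∈ PL₀(V)` is such that `x · b · x⁻¹` is again a planar loop, then every
letter of the minimal representative of `x` belongs to `U`.
-/

open FreeMonoid

variable (V : Type*) [AddCommGroup V] [Module ℝ V]

/-- The defining relations of `PL₀(V)`. -/
inductive PLRel : FreeMonoid V → FreeMonoid V → Prop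
  | pair (v w : V) (h : ¬ LinearIndependent ℝ ![v, w]) :
      PLRel (of v * of w) (of (v + w))
  | zero : PLRel (of (0 : V)) 1

/-- The group (as a quotient monoid) `PL₀(V)` of piecewise linear paths. -/
abbrev PL0 := (conGen (PLRel V)).Quotient

variable {V}

/-- The quotient map `FMon(V) → PL₀(V)`. -/
abbrev PLmk : FreeMonoid V →* PL0 V := (conGen (PLRel V)).mk'

/-- A minimal word: all letters nonzero, consecutive letters linearly independent. -/
def IsMinWord (l : List V) : Prop :=
  (∀ v ∈ l, v ≠ 0) ∧ l.Chain' (fun v w => LinearIndependent ℝ ![v, w])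

/-- The word representing the inverse path: reverse the word and negate each letter. -/
def invWord (l : List V) : List V := l.reverse.map (fun v => -v)

/-!
Prepending a letter to a minimal word and merging it with the first letter whenever the two are
dependent defines an action of `PL₀(V)` on minimal words, so every path has a unique minimal
representative. Suppose some letter of `x` lies outside `U`, and let `v` be the last such letter,
`x = p v q`. The conjugate `q b q⁻¹` reduces to a nonempty minimal loop `c` with letters in `U`,
so `c` has two independent letters, and `p v c (p v)⁻¹` is already minimal because `v` is
independent of every nonzero vector of `U`. Its span then contains `U` and `v`, so it has
dimension at least three.
-/

section LinearIndependence

variable {K M : Type*} [Field K] [AddCommGroup M] [Module K M] {x y w : M}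

theorem LinearIndependent.pair_iff_notMem_span_singleton (hx : x ≠ 0) :
    LinearIndependent K ![x, y] ↔ y ∉ K ∙ x := by
  simp [LinearIndependent.pair_iff' hx, Submodule.mem_span_singleton]

theorem mem_span_singleton_of_not_linearIndependent_pair (h : ¬ LinearIndependent K ![y, x])
    (hx : x ≠ 0) : y ∈ K ∙ x := by
  rwa [LinearIndependent.pair_symm_iff, LinearIndependent.pair_iff_notMem_span_singleton hx,
    not_not] at h

theorem not_linearIndependent_pair_of_mem_span_singleton (hx : x ∈ K ∙ w) (hy : y ∈ K ∙ w) :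
    ¬ LinearIndependent K ![x, y] := by
  obtain ⟨a, rfl⟩ := Submodule.mem_span_singleton.1 hx
  obtain ⟨b, rfl⟩ := Submodule.mem_span_singleton.1 hy
  intro h
  have hab := LinearIndependent.pair_iff.1 h b (-a) (by
    rw [smul_smul, smul_smul, neg_mul, neg_smul, mul_comm, add_neg_cancel])
  exact h.ne_zero 0 (by simp [neg_eq_zero.1 hab.2])

theorem linearIndependent_pair_of_mem_of_notMem {U : Submodule K M} (hx0 : x ≠ 0) (hx : x ∈ U)
    (hy : y ∉ U) : LinearIndependent K ![x, y] :=
  (LinearIndependent.pair_iff_notMem_span_singleton hx0).2 fun h =>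
    hy ((Submodule.span_singleton_le_iff_mem x U).2 hx h)

theorem linearIndependent_triple_of_notMem {U : Submodule K M} {v : M}
    (h : LinearIndependent K ![x, y]) (hx : x ∈ U) (hy : y ∈ U) (hv : v ∉ U) :
    LinearIndependent K ![v, x, y] :=
  linearIndependent_finCons.2 ⟨h, fun hspan => hv <| Submodule.span_le.2
    (Set.range_subset_iff.2 <| Fin.forall_fin_two.2 ⟨hx, hy⟩) hspan⟩

theorem le_finrank_span_of_linearIndependent {n : ℕ} {f : Fin n → M}
    (hf : LinearIndependent K f) {s : Set M} (hs : s.Finite) (hfs : ∀ i, f i ∈ s) :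
    n ≤ Module.finrank K (Submodule.span K s) := by
  have := FiniteDimensional.span_of_finite K hs
  calc n = Module.finrank K (Submodule.span K (Set.range f)) := by
        rw [finrank_span_eq_card hf, Fintype.card_fin]
    _ ≤ _ := Submodule.finrank_mono (Submodule.span_mono (Set.range_subset_iff.2 hfs))

end LinearIndependence

theorem List.exists_eq_append_cons_of_exists_not {α : Type*} {P : α → Prop} :
    ∀ {l : List α}, (∃ v ∈ l, ¬ P v) → ∃ p v q, l = p ++ v :: q ∧ ¬ P v ∧ ∀ u ∈ q, P u
  | a :: t, ⟨v, hv, hPv⟩ => by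
    by_cases ht : ∃ u ∈ t, ¬ P u
    · obtain ⟨p, u, q, rfl, hu, hq⟩ := exists_eq_append_cons_of_exists_not ht
      exact ⟨a :: p, u, q, rfl, hu, hq⟩
    · push Not at ht
      obtain rfl : v = a := (List.mem_cons.1 hv).resolve_right fun h => hPv (ht v h)
      exact ⟨[], v, t, rfl, hPv, ht⟩

theorem mem_invWord {G : Type*} [AddCommGroup G] {l : List G} {v : G} :
    v ∈ invWord l ↔ -v ∈ l := by
  simp [invWord]

theorem invWord_append {G : Type*} [AddCommGroup G] (a b : List G) :
    invWord (a ++ b) = invWord b ++ invWord a := by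
  simp [invWord]

theorem sum_invWord {G : Type*} [AddCommGroup G] (l : List G) : (invWord l).sum = -l.sum := by
  simp [invWord, List.sum_neg]

theorem isMinWord_iff {l : List V} : IsMinWord l ↔
    (∀ v ∈ l, v ≠ 0) ∧ l.IsChain (fun v w => LinearIndependent ℝ ![v, w]) :=
  Iff.rfl

theorem isMinWord_nil : IsMinWord ([] : List V) := ⟨by simp, List.isChain_nil⟩

theorem IsMinWord.of_cons {v : V} {t : List V} (h : IsMinWord (v :: t)) : IsMinWord t :=
  ⟨fun u hu => h.1 u (List.mem_cons_of_mem v hu), (List.isChain_cons.1 h.2).2⟩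

theorem isMinWord_append {a b : List V} :
    IsMinWord (a ++ b) ↔ IsMinWord a ∧ IsMinWord b ∧
      ∀ x ∈ a.getLast?, ∀ y ∈ b.head?, LinearIndependent ℝ ![x, y] := by
  simp only [isMinWord_iff, List.mem_append, List.isChain_append]
  grind

theorem IsMinWord.invWord {l : List V} (h : IsMinWord l) : IsMinWord (invWord l) := by
  refine isMinWord_iff.2 ⟨fun v hv => ?_, ?_⟩
  · exact neg_neg v ▸ neg_ne_zero.2 (h.1 _ (mem_invWord.1 hv))
  · rw [_root_.invWord, List.isChain_map, List.isChain_reverse]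
    exact h.2.imp fun {_ _} hab => by
      rwa [LinearIndependent.pair_neg_left_iff, LinearIndependent.pair_neg_right_iff,
        LinearIndependent.pair_symm_iff]

theorem IsMinWord.exists_eq_cons_cons_of_sum_eq_zero {c : List V} (hc : IsMinWord c)
    (hsum : c.sum = 0) (hne : c ≠ []) :
    ∃ c₀ c₁ t, c = c₀ :: c₁ :: t ∧ LinearIndependent ℝ ![c₀, c₁] := by
  rcases c with _ | ⟨c₀, _ | ⟨c₁, t⟩⟩
  · exact absurd rfl hne
  · exact absurd (by simpa using hsum) (hc.1 c₀ List.mem_cons_self)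
  · exact ⟨c₀, c₁, t, rfl, (List.isChain_cons_cons.1 hc.2).1⟩

theorem isMinWord_append_append_invWord {U : Submodule ℝ V} {p c : List V} {v : V}
    (hp : IsMinWord (p ++ [v])) (hc : IsMinWord c) (hne : c ≠ []) (hcU : ∀ u ∈ c, u ∈ U)
    (hv : v ∉ U) : IsMinWord (p ++ [v] ++ c ++ invWord (p ++ [v])) := by
  refine isMinWord_append.2 ⟨isMinWord_append.2 ⟨hp, hc, ?_⟩, hp.invWord, ?_⟩
  · intro x hx y hy
    obtain rfl : x = v := by simpa [eq_comm] using hx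
    have hyc := List.mem_of_mem_head? hy
    rw [LinearIndependent.pair_symm_iff]
    exact linearIndependent_pair_of_mem_of_notMem (hc.1 y hyc) (hcU y hyc) hv
  · intro x hx y hy
    rw [List.getLast?_append_of_ne_nil _ hne] at hx
    have hxc := List.mem_of_mem_getLast? hx
    obtain rfl : y = -v := by simpa [invWord, eq_comm] using hy
    exact LinearIndependent.pair_neg_right_iff.2
      (linearIndependent_pair_of_mem_of_notMem (hc.1 x hxc) (hcU x hxc) hv)

open scoped Classical in
noncomputable def reduceCons : V → List V → List V
  | v, [] => if v = 0 then [] else [v]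
  | v, w :: t => if v = 0 then w :: t
      else if LinearIndependent ℝ ![v, w] then v :: w :: t else reduceCons (v + w) t

theorem reduceCons_zero (l : List V) : reduceCons 0 l = l := by
  cases l <;> simp [reduceCons]

theorem reduceCons_nil_of_ne_zero {v : V} (hv : v ≠ 0) : reduceCons v [] = [v] := by
  simp [reduceCons, hv]

theorem reduceCons_cons_of_linearIndependent {v w : V} (t : List V)
    (h : LinearIndependent ℝ ![v, w]) : reduceCons v (w :: t) = v :: w :: t := by
  have hv : v ≠ 0 := h.ne_zero 0
  simp [reduceCons, h, hv]

theorem reduceCons_cons_of_not_linearIndependent {v w : V} (t : List V) (hv : v ≠ 0)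
    (h : ¬ LinearIndependent ℝ ![v, w]) : reduceCons v (w :: t) = reduceCons (v + w) t := by
  rw [reduceCons, if_neg hv, if_neg h]

theorem IsMinWord.reduceCons_eq {v : V} {t : List V} (h : IsMinWord (v :: t)) :
    reduceCons v t = v :: t := by
  cases t with
  | nil => exact reduceCons_nil_of_ne_zero (h.1 v List.mem_cons_self)
  | cons w t => exact reduceCons_cons_of_linearIndependent t (List.isChain_cons_cons.1 h.2).1

theorem IsMinWord.reduceCons (v : V) {l : List V} (h : IsMinWord l) :
    IsMinWord (_root_.reduceCons v l) := by
  fun_induction _root_.reduceCons v l with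
  | case1 => exact isMinWord_nil
  | case2 v hv => exact isMinWord_iff.2 ⟨by simpa using hv, List.isChain_singleton v⟩
  | case3 => exact h
  | case4 v w t hv hvw =>
    exact isMinWord_iff.2 ⟨by simpa [hv] using h.1, List.isChain_cons_cons.2 ⟨hvw, h.2⟩⟩
  | case5 v w t _ _ ih => exact ih h.of_cons

theorem sum_reduceCons (v : V) (l : List V) : (reduceCons v l).sum = v + l.sum := by
  fun_induction reduceCons v l <;> simp_all [add_assoc]

theorem forall_mem_reduceCons {S : Type*} [SetLike S V] [AddSubmonoidClass S V] {U : S}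
    {v : V} {l : List V} (hv : v ∈ U) (hl : ∀ x ∈ l, x ∈ U) : ∀ x ∈ reduceCons v l, x ∈ U := by
  fun_induction reduceCons v l <;> simp_all [add_mem]

theorem reduceCons_cons_of_mem_span_singleton {x u : V} {t : List V} (hm : IsMinWord (u :: t))
    (hx : x ∈ ℝ ∙ u) : reduceCons x (u :: t) = reduceCons (x + u) t := by
  by_cases hx0 : x = 0
  · rw [hx0, reduceCons_zero, zero_add, hm.reduceCons_eq]
  · exact reduceCons_cons_of_not_linearIndependent t hx0
      (not_linearIndependent_pair_of_mem_span_singleton hx (Submodule.mem_span_singleton_self u))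

/-- When `w` merges into the first letter `u` of `m`, all of `v`, `w`, `u` lie on the line `ℝ ∙ u`
and the claim recurses to the tail of `m`. -/
theorem reduceCons_reduceCons {v w : V} (h : ¬ LinearIndependent ℝ ![v, w]) {m : List V}
    (hm : IsMinWord m) : reduceCons v (reduceCons w m) = reduceCons (v + w) m := by
  by_cases hv : v = 0
  · rw [hv, reduceCons_zero, zero_add]
  induction m generalizing w with
  | nil =>
    by_cases hw : w = 0
    · rw [hw, reduceCons_zero, add_zero]
    · rw [reduceCons_nil_of_ne_zero hw, reduceCons_cons_of_not_linearIndependent [] hv h]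
  | cons u t ih =>
    by_cases hw : w = 0
    · rw [hw, reduceCons_zero, add_zero]
    by_cases hwu : LinearIndependent ℝ ![w, u]
    · rw [reduceCons_cons_of_linearIndependent t hwu,
        reduceCons_cons_of_not_linearIndependent _ hv h]
    have hwU : w ∈ ℝ ∙ u :=
      mem_span_singleton_of_not_linearIndependent_pair hwu (hm.1 u List.mem_cons_self)
    have hvU : v ∈ ℝ ∙ u := (Submodule.span_singleton_le_iff_mem _ _).2 hwU
      (mem_span_singleton_of_not_linearIndependent_pair h hw)
    have hv_wu : ¬ LinearIndependent ℝ ![v, w + u] :=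
      not_linearIndependent_pair_of_mem_span_singleton hvU
        (add_mem hwU (Submodule.mem_span_singleton_self u))
    rw [reduceCons_cons_of_not_linearIndependent t hw hwu, ih hv_wu hm.of_cons,
      reduceCons_cons_of_mem_span_singleton hm (add_mem hvU hwU), add_assoc]

noncomputable def normalForm (l : List V) : List V := l.foldr reduceCons []

theorem IsMinWord.foldr_reduceCons {m : List V} (hm : IsMinWord m) (l : List V) :
    IsMinWord (l.foldr _root_.reduceCons m) := by
  induction l with
  | nil => exact hm
  | cons v t ih => exact ih.reduceCons v

theorem isMinWord_normalForm (l : List V) : IsMinWord (normalForm l) :=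
  isMinWord_nil.foldr_reduceCons l

theorem IsMinWord.normalForm_eq {l : List V} (h : IsMinWord l) : normalForm l = l := by
  induction l with
  | nil => rfl
  | cons v t ih =>
    change _root_.reduceCons v (normalForm t) = v :: t
    rw [ih h.of_cons, h.reduceCons_eq]

theorem sum_normalForm (l : List V) : (normalForm l).sum = l.sum := by
  induction l with
  | nil => rfl
  | cons v t ih => simp [normalForm, sum_reduceCons, ← ih]

theorem forall_mem_normalForm {S : Type*} [SetLike S V] [AddSubmonoidClass S V] {U : S}
    {l : List V} (hl : ∀ x ∈ l, x ∈ U) : ∀ x ∈ normalForm l, x ∈ U := by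
  induction l with
  | nil => simp [normalForm]
  | cons v t ih =>
    rw [List.forall_mem_cons] at hl
    exact forall_mem_reduceCons hl.1 (ih hl.2)

theorem PLmk_of_zero : PLmk (of (0 : V)) = 1 :=
  (Con.eq _).2 (ConGen.Rel.of _ _ PLRel.zero)

theorem PLmk_of_add {v w : V} (h : ¬ LinearIndependent ℝ ![v, w]) :
    PLmk (of (v + w)) = PLmk (of v) * PLmk (of w) :=
  ((Con.eq _).2 (ConGen.Rel.of _ _ (PLRel.pair v w h))).symm

theorem PLmk_reduceCons (v : V) (l : List V) :
    PLmk (ofList (reduceCons v l)) = PLmk (of v) * PLmk (ofList l) := by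
  fun_induction reduceCons v l with
  | case1 => rw [PLmk_of_zero, one_mul]
  | case2 v hv => rfl
  | case3 w t => rw [PLmk_of_zero, one_mul]
  | case4 => rw [ofList_cons, map_mul]
  | case5 v w t _ hvw ih => rw [ih, PLmk_of_add hvw, ofList_cons, map_mul, mul_assoc]

theorem PLmk_normalForm (l : List V) : PLmk (ofList (normalForm l)) = PLmk (ofList l) := by
  induction l with
  | nil => rfl
  | cons v t ih =>
    change PLmk (ofList (reduceCons v (normalForm t))) = _
    rw [PLmk_reduceCons, ih, ofList_cons, map_mul]

theorem PLmk_invWord_mul (l : List V) : PLmk (ofList (invWord l)) * PLmk (ofList l) = 1 := by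
  induction l with
  | nil => rfl
  | cons v t ih =>
    have hv : v ∈ ℝ ∙ v := Submodule.mem_span_singleton_self v
    calc PLmk (ofList (invWord (v :: t))) * PLmk (ofList (v :: t))
        = PLmk (ofList (invWord t)) * PLmk (of (-v + v)) * PLmk (ofList t) := by
          rw [PLmk_of_add (not_linearIndependent_pair_of_mem_span_singleton (neg_mem hv) hv)]
          simp [invWord, mul_assoc]
      _ = 1 := by rw [neg_add_cancel, PLmk_of_zero, mul_one, ih]

noncomputable def actionCon : Con (FreeMonoid V) where
  r a b := ∀ m, IsMinWord m → a.toList.foldr reduceCons m = b.toList.foldr reduceCons m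
  iseqv := ⟨fun _ _ _ => rfl, fun h m hm => (h m hm).symm,
    fun h₁ h₂ m hm => (h₁ m hm).trans (h₂ m hm)⟩
  mul' {_ _ _ d} hab hcd m hm := by
    simp only [toList_mul, List.foldr_append]
    rw [hcd m hm, hab _ (hm.foldr_reduceCons d.toList)]

theorem conGen_PLRel_le_actionCon : conGen (PLRel V) ≤ actionCon :=
  Con.conGen_le.2 fun _ _ hr m hm => by
    cases hr with
    | pair v w h => exact reduceCons_reduceCons h hm
    | zero => exact reduceCons_zero m

theorem normalForm_eq_of_PLmk_eq {a b : List V} (h : PLmk (ofList a) = PLmk (ofList b)) :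
    normalForm a = normalForm b :=
  conGen_PLRel_le_actionCon ((Con.eq _).1 h) [] isMinWord_nil

theorem IsMinWord.eq_of_PLmk_eq {a b : List V} (ha : IsMinWord a) (hb : IsMinWord b)
    (h : PLmk (ofList a) = PLmk (ofList b)) : a = b := by
  rw [← ha.normalForm_eq, ← hb.normalForm_eq, normalForm_eq_of_PLmk_eq h]

theorem PLmk_conj_eq_normalForm (p q b : List V) :
    PLmk (ofList (p ++ q ++ b ++ invWord (p ++ q))) =
      PLmk (ofList (p ++ normalForm (q ++ b ++ invWord q) ++ invWord p)) := by
  simp only [invWord_append, ofList_append, map_mul, PLmk_normalForm, mul_assoc]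

theorem normalForm_conj_ne_nil {b : List V} (hb : IsMinWord b) (hne : b ≠ []) (q : List V) :
    normalForm (q ++ b ++ invWord q) ≠ [] := by
  intro h
  set X := PLmk (ofList q)
  set B := PLmk (ofList b)
  set Y := PLmk (ofList (invWord q))
  have hYX : Y * X = 1 := PLmk_invWord_mul q
  have hXBY : X * B * Y = 1 := by
    rw [← map_mul, ← map_mul, ← ofList_append, ← ofList_append, ← PLmk_normalForm, h]
    rfl
  have hB : B = 1 := calc
    B = Y * X * B * (Y * X) := by rw [hYX, one_mul, mul_one]
    _ = Y * (X * B * Y) * X := by simp only [mul_assoc]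
    _ = 1 := by rw [hXBY, mul_one, hYX]
  exact hne (hb.eq_of_PLmk_eq isMinWord_nil hB)

theorem normalForm_conj_eq_cons_cons {U : Submodule ℝ V} {b q : List V} (hb : IsMinWord b)
    (hne : b ≠ []) (hsum : b.sum = 0) (hbU : ∀ u ∈ b, u ∈ U) (hqU : ∀ u ∈ q, u ∈ U) :
    ∃ c₀ c₁ t, normalForm (q ++ b ++ invWord q) = c₀ :: c₁ :: t ∧
      LinearIndependent ℝ ![c₀, c₁] ∧ ∀ u ∈ c₀ :: c₁ :: t, u ∈ U := by
  obtain ⟨c₀, c₁, t, hct, hc₀₁⟩ := (isMinWord_normalForm _).exists_eq_cons_cons_of_sum_eq_zero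
    (by simp [sum_normalForm, sum_invWord, hsum]) (normalForm_conj_ne_nil hb hne q)
  refine ⟨c₀, c₁, t, hct, hc₀₁, hct ▸ forall_mem_normalForm ?_⟩
  simp only [List.mem_append, mem_invWord]
  rintro u ((hu | hu) | hu)
  exacts [hqU u hu, hbU u hu, neg_neg u ▸ neg_mem (hqU _ hu)]

theorem tail_of_planar_conjugate_is_planar_general
    (lb lx : List V)
    -- `b` is a nontrivial planar loop with 2-dimensional span `U = span lb`:
    (hbmin : IsMinWord lb) (hbsum : lb.sum = 0)
    (hb2 : Module.finrank ℝ (Submodule.span ℝ {v | v ∈ lb}) = 2)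
    -- `lx` is the minimal representative of `x`:
    (hxmin : IsMinWord lx)
    -- `x · b · x⁻¹` is a planar loop:
    (hconj : ∃ m : List V, IsMinWord m ∧ m.sum = 0 ∧
        Module.finrank ℝ (Submodule.span ℝ {v | v ∈ m}) ≤ 2 ∧
        PLmk (FreeMonoid.ofList m) =
          PLmk (FreeMonoid.ofList (lx ++ lb ++ invWord lx))) :
    ∀ v ∈ lx, v ∈ Submodule.span ℝ {u | u ∈ lb} := by
  have hlb : lb ≠ [] := by
    rintro rfl
    rw [Submodule.span_eq_bot.2 (by simp), finrank_bot] at hb2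
    omega
  set U := Submodule.span ℝ {u | u ∈ lb}
  obtain ⟨m, hmmin, -, hmrank, hm⟩ := hconj
  by_contra! hx
  obtain ⟨p, v, q, rfl, hvU, hqU⟩ := List.exists_eq_append_cons_of_exists_not hx
  obtain ⟨c₀, c₁, t, hct, hc₀₁, hcU⟩ := normalForm_conj_eq_cons_cons hbmin hlb hbsum
    (fun u hu => Submodule.subset_span hu) hqU
  have hc : IsMinWord (c₀ :: c₁ :: t) := hct ▸ isMinWord_normalForm _
  have hpv : IsMinWord (p ++ [v]) := (isMinWord_append.1 (by simpa using hxmin)).1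
  have hmc : m = p ++ [v] ++ c₀ :: c₁ :: t ++ invWord (p ++ [v]) :=
    hmmin.eq_of_PLmk_eq (isMinWord_append_append_invWord hpv hc (List.cons_ne_nil _ _) hcU hvU)
      (by rw [hm, ← hct, ← PLmk_conj_eq_normalForm]; simp)
  have h3 := le_finrank_span_of_linearIndependent
    (linearIndependent_triple_of_notMem hc₀₁ (hcU c₀ (by simp)) (hcU c₁ (by simp)) hvU)
    m.finite_toSet (by intro i; fin_cases i <;> simp [hmc])
  omega

theorem tail_of_planar_conjugate_is_planar [FiniteDimensional ℝ V]
    (lb lx : List V)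
    -- `b` is a nontrivial planar loop with 2-dimensional span `U = span lb`:
    (hbmin : IsMinWord lb) (hbsum : lb.sum = 0)
    (hb2 : Module.finrank ℝ (Submodule.span ℝ {v | v ∈ lb}) = 2)
    -- `lx` is the minimal representative of `x`:
    (hxmin : IsMinWord lx)
    -- `x · b · x⁻¹` is a planar loop:
    (hconj : ∃ m : List V, IsMinWord m ∧ m.sum = 0 ∧
        Module.finrank ℝ (Submodule.span ℝ {v | v ∈ m}) ≤ 2 ∧
        PLmk (FreeMonoid.ofList m) =
          PLmk (FreeMonoid.ofList (lx ++ lb ++ invWord lx))) :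
    ∀ v ∈ lx, v ∈ Submodule.span ℝ {u | u ∈ lb} :=
  tail_of_planar_conjugate_is_planar_general lb lx hbmin hbsum hb2 hxmin hconj
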